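/- arXiv:1308.4425 — 6 statements merged into one kernel-verified Lean document; each statement's English description precedes it below -/
import Mathlib

section
/- Let a, b ∈ ℚ[X] with b ≠ 0 and deg a ≤ deg b + 1, and suppose the rational function f = a/b takes integer values at all sufficiently large positive integers. Then there exist rational constants A and B such that f(k) = Ak + B for all k in the domain of f. -/
open Polynomial

theorem integer_valued_rational_function_is_linear (a b : ℚ[X]) (hb : b ≠ 0)
    (hdeg : a.degree ≤ b.degree + 1)
    (hint : ∃ N : ℕ, ∀ k : ℕ, N ≤ k → ∃ m : ℤ, a.eval (k : ℚ) / b.eval (k : ℚ) = (m : ℚ)) :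
    ∃ A B : ℚ, ∀ x : ℚ, b.eval x ≠ 0 → a.eval x / b.eval x = A * x + B := by
  classical
  obtain ⟨N, hN⟩ := hint
  set q : ℚ[X] := a / b with hq
  set r : ℚ[X] := a % b with hr
  have hab : b * q + r = a := EuclideanDomain.div_add_mod a b
  have hrdeg : r.degree < b.degree := EuclideanDomain.mod_lt a hb
  -- q has degree ≤ 1
  have hqdeg : q.degree ≤ 1 := by
    by_cases hq0 : q = 0
    · simp [hq0]
    · have h1 : r.degree < (b * q).degree := lt_of_lt_of_le hrdeg (degree_le_mul_left b hq0)
      have h2 : (b * q + r).degree = (b * q).degree := degree_add_eq_left_of_degree_lt h1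
      have h3 : b.degree + q.degree ≤ b.degree + 1 := by
        rw [← degree_mul, ← h2, hab]; exact hdeg
      have hbbot : b.degree ≠ ⊥ := fun h => hb (degree_eq_bot.mp h)
      exact (WithBot.add_le_add_iff_left hbbot).mp h3
  set A : ℚ := q.coeff 1 with hA
  set B : ℚ := q.coeff 0 with hB
  have hqform : q = C A * X + C B := eq_X_add_C_of_degree_le_one hqdeg
  -- evaluation of q
  have hqeval : ∀ x : ℚ, q.eval x = A * x + B := by
    intro x; rw [hqform]; simp
  -- common denominator
  set d : ℕ := A.den * B.den with hd
  have hd0 : (d : ℚ) ≠ 0 := by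
    simp [hd, A.den_ne_zero, B.den_ne_zero]
  have hdq : ∀ k : ℕ, (d : ℚ) * q.eval (k : ℚ) =
      ((B.den * A.num * k + A.den * B.num : ℤ) : ℚ) := by
    intro k
    have h1 : (A.den : ℚ) * A = A.num := by
      rw [mul_comm]; exact_mod_cast Rat.mul_den_eq_num A
    have h2 : (B.den : ℚ) * B = B.num := by
      rw [mul_comm]; exact_mod_cast Rat.mul_den_eq_num B
    rw [hqeval, hd]
    push_cast
    calc (A.den : ℚ) * B.den * (A * k + B)
        = (B.den : ℚ) * ((A.den : ℚ) * A) * k + (A.den : ℚ) * ((B.den : ℚ) * B) := by ring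
      _ = (B.den : ℚ) * A.num * k + (A.den : ℚ) * B.num := by rw [h1, h2]
  -- b is eventually nonzero at naturals
  have hfin : {k : ℕ | b.eval (k : ℚ) = 0}.Finite := by
    have := (Polynomial.finite_setOf_isRoot hb).preimage
      ((Nat.cast_injective : Function.Injective ((↑) : ℕ → ℚ)).injOn)
    exact this
  obtain ⟨M, hM⟩ := hfin.bddAbove
  have hbne : ∀ k : ℕ, M + 1 ≤ k → b.eval (k : ℚ) ≠ 0 := by
    intro k hk h0
    have : k ≤ M := hM h0
    omega
  -- the scaled remainder tends to zero
  have htend : Filter.Tendsto (fun k : ℕ => (d : ℚ) * (r.eval (k : ℚ) / b.eval (k : ℚ)))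
      Filter.atTop (nhds 0) := by
    have h1 := (Polynomial.div_tendsto_zero_of_degree_lt r b hrdeg).comp
      (tendsto_natCast_atTop_atTop (R := ℚ))
    have h2 := h1.const_mul (d : ℚ)
    simpa using h2
  have hev : ∀ᶠ k : ℕ in Filter.atTop,
      (d : ℚ) * (r.eval (k : ℚ) / b.eval (k : ℚ)) ∈ Set.Ioo (-1 : ℚ) 1 :=
    htend.eventually (Ioo_mem_nhds (by norm_num) (by norm_num))
  obtain ⟨N₃, hN₃⟩ := Filter.eventually_atTop.mp hev
  -- r vanishes at all large naturals
  have hrzero : ∀ k : ℕ, max (max N N₃) (M + 1) ≤ k → r.eval (k : ℚ) = 0 := by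
    intro k hk
    have hkN : N ≤ k := le_trans (le_trans (le_max_left _ _) (le_max_left _ _)) hk
    have hkN₃ : N₃ ≤ k := le_trans (le_trans (le_max_right _ _) (le_max_left _ _)) hk
    have hkM : M + 1 ≤ k := le_trans (le_max_right _ _) hk
    have hbk : b.eval (k : ℚ) ≠ 0 := hbne k hkM
    obtain ⟨m, hm⟩ := hN k hkN
    -- express the scaled remainder as an integer
    have hval : a.eval (k : ℚ) = b.eval (k : ℚ) * q.eval (k : ℚ) + r.eval (k : ℚ) := by
      conv_lhs => rw [← hab]
      simp
    have hsplit : r.eval (k : ℚ) / b.eval (k : ℚ) = (m : ℚ) - q.eval (k : ℚ) := by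
      rw [← hm, hval]
      field_simp
      ring
    have hint' : (d : ℚ) * (r.eval (k : ℚ) / b.eval (k : ℚ)) =
        ((d * m - (B.den * A.num * k + A.den * B.num) : ℤ) : ℚ) := by
      rw [hsplit, mul_sub, hdq k]
      push_cast
      ring
    have hIoo := hN₃ k hkN₃
    rw [hint'] at hIoo
    obtain ⟨h1, h2⟩ := hIoo
    have hz : (d * m - (B.den * A.num * k + A.den * B.num) : ℤ) = 0 := by
      have h1' : (-1 : ℤ) < d * m - (B.den * A.num * k + A.den * B.num) := by exact_mod_cast h1
      have h2' : (d * m - (B.den * A.num * k + A.den * B.num) : ℤ) < 1 := by exact_mod_cast h2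
      omega
    have : (d : ℚ) * (r.eval (k : ℚ) / b.eval (k : ℚ)) = 0 := by rw [hint', hz]; simp
    have hdiv : r.eval (k : ℚ) / b.eval (k : ℚ) = 0 := by
      rcases mul_eq_zero.mp this with h | h
      · exact absurd h hd0
      · exact h
    exact (div_eq_zero_iff.mp hdiv).resolve_right hbk
  -- hence r = 0
  have hr0 : r = 0 := by
    apply Polynomial.eq_zero_of_infinite_isRoot
    apply Set.Infinite.mono (s := ((↑) : ℕ → ℚ) '' Set.Ici (max (max N N₃) (M + 1)))
    · rintro x ⟨k, hk, rfl⟩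
      exact hrzero k hk
    · exact (Set.Ici_infinite _).image
        ((Nat.cast_injective : Function.Injective ((↑) : ℕ → ℚ)).injOn)
  -- conclude
  refine ⟨A, B, fun x hx => ?_⟩
  have hval : a.eval x = b.eval x * q.eval x := by
    conv_lhs => rw [← hab]
    simp [hr0]
  rw [hval, mul_div_cancel_left₀ _ hx, hqeval]
end

section
/- Let r be a positive integer and let f = a/b be a rational function over ℚ with deg a ≤ deg b + 1, such that f takes integer values at all sufficiently large positive integers, f(0) = 0, and f(−2r) = 0. Then f vanishes identically on its domain. -/
open Polynomial Filter

/-- An integer-valued sequence converging (in `ℚ`) is eventually equal to its limit. -/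
lemma int_tendsto_eventually_eq (u : ℕ → ℤ) (c : ℚ)
    (h : Filter.Tendsto (fun n => (u n : ℚ)) Filter.atTop (nhds c)) :
    ∀ᶠ n in Filter.atTop, (u n : ℚ) = c := by
  obtain ⟨N, hN⟩ := Metric.tendsto_atTop.1 h (1 / 2) (by norm_num)
  have hconst : ∀ n, N ≤ n → u n = u N := by
    intro n hn
    have h1 := hN n hn
    have h2 := hN N le_rfl
    rw [Rat.dist_eq] at h1 h2
    have habs : |((u n - u N : ℤ) : ℝ)| < 1 := by
      push_cast at h1 h2 ⊢
      calc |(u n : ℝ) - (u N : ℝ)|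
          = |((u n : ℝ) - (c : ℝ)) + ((c : ℝ) - (u N : ℝ))| := by ring_nf
        _ ≤ |(u n : ℝ) - (c : ℝ)| + |(c : ℝ) - (u N : ℝ)| := abs_add_le _ _
        _ < 1 := by rw [abs_sub_comm (c : ℝ)] ; linarith
    have h3 : |u n - u N| < 1 := by exact_mod_cast habs
    rw [abs_lt] at h3
    omega
  have hc : c = (u N : ℚ) := by
    refine tendsto_nhds_unique h (Filter.Tendsto.congr' ?_ tendsto_const_nhds)
    filter_upwards [Filter.eventually_ge_atTop N] with n hn
    rw [hconst n hn]
  filter_upwards [Filter.eventually_ge_atTop N] with n hn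
  rw [hconst n hn, hc]

theorem integer_valued_rational_function_with_two_zeros_vanishes
    (r : ℕ) (hr : 0 < r) (a b : ℚ[X]) (hb : b ≠ 0)
    (hdeg : a.degree ≤ b.degree + 1)
    (hint : ∃ N : ℕ, ∀ k : ℕ, N ≤ k → ∃ m : ℤ, a.eval (k : ℚ) / b.eval (k : ℚ) = (m : ℚ))
    (hb0 : b.eval 0 ≠ 0) (hb2r : b.eval (-(2 * r : ℚ)) ≠ 0)
    (h0 : a.eval 0 / b.eval 0 = 0)
    (h2r : a.eval (-(2 * r : ℚ)) / b.eval (-(2 * r : ℚ)) = 0) :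
    ∀ x : ℚ, b.eval x ≠ 0 → a.eval x / b.eval x = 0 := by
  obtain ⟨N, hN⟩ := hint
  set q : ℚ[X] := a / b with hq
  set rem : ℚ[X] := a % b with hremdef
  have hdm : b * q + rem = a := EuclideanDomain.div_add_mod a b
  have hlt : rem.degree < b.degree := EuclideanDomain.mod_lt a hb
  -- degree of q is at most 1
  have hq1 : q.degree ≤ 1 := by
    by_cases hq0 : q = 0
    · rw [hq0, degree_zero]; exact bot_le
    · have h1 : (b * q).degree ≤ b.degree + 1 := by
        have hbq : b * q = a - rem := by rw [← hdm]; ring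
        rw [hbq]
        refine (degree_sub_le _ _).trans ?_
        rw [max_le_iff]
        refine ⟨hdeg, hlt.le.trans (le_add_of_nonneg_right ?_)⟩
        exact zero_le_one
      rw [degree_mul, degree_eq_natDegree hb, degree_eq_natDegree hq0] at h1
      rw [degree_eq_natDegree hq0]
      have : (b.natDegree + q.natDegree : ℕ) ≤ (b.natDegree + 1 : ℕ) := by
        exact_mod_cast h1
      exact_mod_cast Nat.le_of_add_le_add_left this
  have c₁eq := eq_X_add_C_of_degree_le_one hq1
  set c₁ : ℚ := q.coeff 1 with hc1def
  set c₀ : ℚ := q.coeff 0 with hc0def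
  have hqeval : ∀ y : ℚ, q.eval y = c₁ * y + c₀ := by
    intro y
    conv_lhs => rw [c₁eq]
    simp
  -- beyond K, b has no roots and integrality holds
  obtain ⟨x₀, hx₀⟩ := b.exists_max_root hb
  obtain ⟨K₀, hK₀⟩ := exists_nat_gt x₀
  set K : ℕ := max N K₀ with hKdef
  have hbK : ∀ k : ℕ, K ≤ k → b.eval (k : ℚ) ≠ 0 := by
    intro k hk hroot
    have h1 := hx₀ _ hroot
    have h2 : (K₀ : ℚ) ≤ k := by
      exact_mod_cast (le_max_right N K₀).trans hk
    linarith
  set e : ℕ → ℚ := fun k => rem.eval (k : ℚ) / b.eval (k : ℚ) with hedef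
  have he : Tendsto e atTop (nhds 0) :=
    (Polynomial.div_tendsto_zero_of_degree_lt rem b hlt).comp tendsto_natCast_atTop_atTop
  -- integer values
  choose m hm using hN
  set u : ℕ → ℤ := fun k => if h : N ≤ k then m k h else 0 with hudef
  have hu : ∀ k, N ≤ k → a.eval (k : ℚ) / b.eval (k : ℚ) = (u k : ℚ) := by
    intro k hk
    simp only [hudef, dif_pos hk]
    exact hm k hk
  have hform : ∀ k, K ≤ k → (u k : ℚ) = c₁ * k + c₀ + e k := by
    intro k hk
    have hbk := hbK k hk
    have hNk : N ≤ k := (le_max_left _ _).trans hk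
    rw [← hu k hNk]
    have ha : a.eval (k : ℚ) = b.eval (k : ℚ) * q.eval (k : ℚ) + rem.eval (k : ℚ) := by
      conv_lhs => rw [← hdm]
      simp
    rw [ha, add_div, mul_div_cancel_left₀ _ hbk, hqeval]
  -- first differences converge to c₁ and are integers
  set D : ℕ → ℤ := fun k => u (k + 1) - u k with hDdef
  have hD : Tendsto (fun k => (D k : ℚ)) atTop (nhds c₁) := by
    have h1 : Tendsto (fun k => c₁ + (e (k + 1) - e k)) atTop (nhds c₁) := by
      have h2 := (he.comp (tendsto_add_atTop_nat 1)).sub he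
      simpa using tendsto_const_nhds.add h2
    refine h1.congr' ?_
    filter_upwards [Filter.eventually_ge_atTop K] with k hk
    have h2 := hform k hk
    have h3 := hform (k + 1) (hk.trans (Nat.le_succ k))
    push_cast [hDdef]
    rw [h3, h2]
    push_cast
    ring
  obtain ⟨K₁, hK₁⟩ := Filter.eventually_atTop.1 (int_tendsto_eventually_eq D c₁ hD)
  set m₁ : ℤ := D K₁ with hm₁def
  have hm₁ : (m₁ : ℚ) = c₁ := hK₁ _ le_rfl
  -- second sequence forces c₀ integral and e eventually zero
  set g : ℕ → ℤ := fun k => u k - m₁ * k with hgdef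
  have hg : Tendsto (fun k => (g k : ℚ)) atTop (nhds c₀) := by
    have h1 : Tendsto (fun k => c₀ + e k) atTop (nhds c₀) := by
      simpa using tendsto_const_nhds.add he
    refine h1.congr' ?_
    filter_upwards [Filter.eventually_ge_atTop K] with k hk
    have h2 := hform k hk
    push_cast [hgdef]
    rw [h2, hm₁]
    ring
  obtain hgconst := int_tendsto_eventually_eq g c₀ hg
  have herem : ∀ᶠ k : ℕ in atTop, rem.eval ((k : ℕ) : ℚ) = 0 := by
    filter_upwards [hgconst, Filter.eventually_ge_atTop K] with k h1 h2
    have h3 := hform k h2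
    have hbk := hbK k h2
    have he0 : e k = 0 := by
      have h4 : (g k : ℚ) = c₀ + e k := by
        push_cast [hgdef]
        rw [h3, hm₁]
        ring
      rw [h1] at h4
      linarith
    rw [hedef] at he0
    exact (_root_.div_eq_zero_iff.mp he0).resolve_right hbk
  obtain ⟨K₂, hK₂⟩ := Filter.eventually_atTop.1 herem
  have hrem0 : rem = 0 := by
    apply eq_zero_of_infinite_isRoot
    apply Set.infinite_of_injective_forall_mem (f := fun n : ℕ => ((n + K₂ : ℕ) : ℚ))
    · intro x y hxy
      have : ((x + K₂ : ℕ) : ℚ) = ((y + K₂ : ℕ) : ℚ) := hxy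
      have := Nat.cast_injective this
      omega
    · intro n
      exact hK₂ _ (Nat.le_add_left _ _)
  have hab : a = b * q := by rw [← hdm, hrem0, add_zero]
  -- q vanishes at 0 and -2r, so q = 0
  have hq0 : q.eval 0 = 0 := by
    rw [hab, eval_mul, mul_div_cancel_left₀ _ hb0] at h0
    exact h0
  have hq2r : q.eval (-(2 * r : ℚ)) = 0 := by
    rw [hab, eval_mul, mul_div_cancel_left₀ _ hb2r] at h2r
    exact h2r
  have hc₀ : c₀ = 0 := by
    have := hqeval 0
    rw [hq0] at this
    linarith
  have hc₁ : c₁ = 0 := by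
    have h5 := hqeval (-(2 * r : ℚ))
    rw [hq2r, hc₀] at h5
    have hr' : (2 * r : ℚ) ≠ 0 := by
      have : (0 : ℚ) < r := by exact_mod_cast hr
      positivity
    have := h5.symm
    rw [add_zero, mul_neg, neg_eq_zero, mul_eq_zero] at this
    exact this.resolve_right hr'
  have hqz : q = 0 := by
    rw [c₁eq, hc₀, hc₁]
    simp
  intro x hx
  rw [hab, hqz, mul_zero, eval_zero, zero_div]
end

section
/- For every integer n ≥ 2, the sum over j = 1, …, n−1 of 1/sin²(jπ/n) equals (n²−1)/3. -/
open Real Finset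


lemma aux_gen (z : ℂ) (n : ℕ) :
    (z - 1) * ∑ k ∈ Finset.range n, (k : ℂ) * z ^ k
      = ((n : ℂ) - 1) * z ^ n - (∑ k ∈ Finset.range n, z ^ k) + 1 := by
  induction n with
  | zero => simp
  | succ m ih =>
    rw [Finset.sum_range_succ, Finset.sum_range_succ]
    push_cast
    linear_combination ih

lemma aux_key (n : ℕ) (z : ℂ) (hz1 : z ≠ 1) (hzn : z ^ n = 1) :
    (z - 1) * ∑ k ∈ Finset.range n, (k : ℂ) * z ^ k = n := by
  rw [aux_gen, geom_sum_eq hz1, hzn]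
  field_simp
  ring

lemma aux_sq (n : ℕ) : ∑ k ∈ Finset.range n, (k : ℂ)^2
    = (n : ℂ) * (n - 1) * (2 * n - 1) / 6 := by
  induction n with
  | zero => simp
  | succ m ih => rw [Finset.sum_range_succ, ih]; push_cast; ring

lemma aux_id (n : ℕ) : ∑ k ∈ Finset.range n, (k : ℂ)
    = (n : ℂ) * (n - 1) / 2 := by
  induction n with
  | zero => simp
  | succ m ih => rw [Finset.sum_range_succ, ih]; push_cast; ring

lemma perterm (n : ℕ) (hn : 2 ≤ n) (j : ℕ) (hj1 : 1 ≤ j) (hj2 : j ≤ n - 1) :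
    (((1 : ℝ) / (Real.sin (j * Real.pi / n)) ^ 2 : ℝ) : ℂ)
      = 4 / (n:ℂ)^2 * ∑ k ∈ Finset.range n, ∑ m ∈ Finset.range n,
          ((k:ℂ) * m) * ((Complex.exp (2 * Real.pi * Complex.I / n) ^ k
            * (Complex.exp (2 * Real.pi * Complex.I / n))⁻¹ ^ m) ^ j) := by
  have hn0 : (n:ℂ) ≠ 0 := Nat.cast_ne_zero.mpr (by omega)
  set w : ℂ := Complex.exp (2 * Real.pi * Complex.I / n) with hw
  have hprim : IsPrimitiveRoot w n := Complex.isPrimitiveRoot_exp n (by omega)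
  set z : ℂ := w ^ j with hz
  have hjn : j < n := by omega
  have hz1 : z ≠ 1 := hprim.pow_ne_one_of_pos_of_lt (by omega) hjn
  have hzn : z ^ n = 1 := by
    rw [hz, ← pow_mul, mul_comm, pow_mul, hprim.pow_eq_one, one_pow]
  have hz0 : z ≠ 0 := pow_ne_zero _ (hprim.ne_zero (by omega))
  have hinv1 : z⁻¹ ≠ 1 := by
    intro h; apply hz1; rw [← inv_inv z, h, inv_one]
  have hinvn : z⁻¹ ^ n = 1 := by rw [inv_pow, hzn, inv_one]
  have h1 := aux_key n z hz1 hzn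
  have h2 := aux_key n z⁻¹ hinv1 hinvn
  have hzz : z * z⁻¹ = 1 := mul_inv_cancel₀ hz0
  have hzexp : z = Complex.exp ((2 * Real.pi * j / n : ℝ) * Complex.I) := by
    rw [hz, hw, ← Complex.exp_nat_mul]
    congr 1
    push_cast
    ring
  have hcos : z + z⁻¹ = 2 * (Real.cos (2 * Real.pi * j / n) : ℂ) := by
    rw [hzexp, ← Complex.exp_neg, Complex.ofReal_cos, Complex.cos]
    ring
  have hsinR : 2 - 2 * Real.cos (2 * Real.pi * j / n)
      = 4 * (Real.sin (j * Real.pi / n)) ^ 2 := by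
    have harg : 2 * Real.pi * (j:ℝ) / n = 2 * ((j:ℝ) * Real.pi / n) := by ring
    rw [harg, Real.cos_two_mul]
    nlinarith [Real.sin_sq_add_cos_sq ((j:ℝ) * Real.pi / n)]
  have hsin : (2 : ℂ) - z - z⁻¹ = 4 * ((Real.sin (j * Real.pi / n) : ℝ) : ℂ) ^ 2 := by
    have hc := congrArg (Complex.ofReal) hsinR
    simp only [Complex.ofReal_sub, Complex.ofReal_mul, Complex.ofReal_pow,
      Complex.ofReal_ofNat] at hc
    linear_combination hc - hcos
  have hs0 : Real.sin ((j:ℝ) * Real.pi / n) ≠ 0 := by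
    have h1' : 0 < (j:ℝ) * Real.pi / n := by positivity
    have h2' : (j:ℝ) * Real.pi / n < Real.pi := by
      rw [div_lt_iff₀ (by positivity)]
      have : (j:ℝ) < n := by exact_mod_cast hjn
      nlinarith [Real.pi_pos]
    exact ne_of_gt (Real.sin_pos_of_pos_of_lt_pi h1' h2')
  have hs0C : ((Real.sin ((j:ℝ) * Real.pi / n) : ℝ) : ℂ) ≠ 0 :=
    Complex.ofReal_ne_zero.mpr hs0
  set S : ℂ := ∑ k ∈ Finset.range n, (k:ℂ) * z ^ k with hS
  set S' : ℂ := ∑ k ∈ Finset.range n, (k:ℂ) * z⁻¹ ^ k with hS'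
  have key : 4 * ((Real.sin (j * Real.pi / n) : ℝ) : ℂ) ^ 2 * (S * S')
      = (n:ℂ) * n := by
    rw [← hsin]
    linear_combination ((z⁻¹ - 1) * S') * h1 + (n:ℂ) * h2 - (S * S') * hzz
  have hdsum : ∑ k ∈ Finset.range n, ∑ m ∈ Finset.range n,
      ((k:ℂ) * m) * ((w ^ k * w⁻¹ ^ m) ^ j) = S * S' := by
    rw [hS, hS', Finset.sum_mul_sum]
    refine Finset.sum_congr rfl fun k _ => Finset.sum_congr rfl fun m _ => ?_
    have e1 : (w ^ k * w⁻¹ ^ m) ^ j = z ^ k * z⁻¹ ^ m := by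
      rw [hz, mul_pow, pow_right_comm, pow_right_comm w⁻¹ m j, inv_pow w j, inv_pow]
    rw [e1]
    ring
  rw [hdsum]
  simp only [Complex.ofReal_div, Complex.ofReal_one, Complex.ofReal_pow,
    Complex.ofReal_sin] at key hs0C ⊢
  push_cast at key hs0C ⊢
  field_simp
  linear_combination -key

lemma geo (n : ℕ) (hn : 2 ≤ n) (k m : ℕ) (hk : k < n) (hm : m < n) :
    ∑ j ∈ Finset.Icc 1 (n - 1),
        ((Complex.exp (2 * Real.pi * Complex.I / n)) ^ k
          * (Complex.exp (2 * Real.pi * Complex.I / n))⁻¹ ^ m) ^ j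
      = (if k = m then (n:ℂ) else 0) - 1 := by
  set w : ℂ := Complex.exp (2 * Real.pi * Complex.I / n) with hw
  have hprim : IsPrimitiveRoot w n := Complex.isPrimitiveRoot_exp n (by omega)
  have hw0 : w ≠ 0 := hprim.ne_zero (by omega)
  set u : ℂ := w ^ k * w⁻¹ ^ m with hu
  have hIcc : Finset.Icc 1 (n - 1) = Finset.Ico 1 n := by
    rw [← Finset.Ico_add_one_right_eq_Icc]
    congr 1
    omega
  have hsplit : ∑ j ∈ Finset.range n, u ^ j = u ^ 0 + ∑ j ∈ Finset.Ico 1 n, u ^ j := by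
    rw [Finset.range_eq_Ico, Finset.sum_eq_sum_Ico_succ_bot (by omega)]
  have hsum : ∑ j ∈ Finset.Icc 1 (n - 1), u ^ j
      = (∑ j ∈ Finset.range n, u ^ j) - 1 := by
    rw [hIcc, hsplit, pow_zero]; ring
  rw [hsum]
  by_cases hkm : k = m
  · subst hkm
    have hu1 : u = 1 := by rw [hu, ← mul_pow, mul_inv_cancel₀ hw0, one_pow]
    simp [hu1]
  · have hun : u ^ n = 1 := by
      rw [hu, mul_pow, pow_right_comm, pow_right_comm w⁻¹ m n, inv_pow w n,
        hprim.pow_eq_one, inv_one, one_pow, one_pow, one_mul]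
    have hu1 : u ≠ 1 := by
      intro h
      rw [hu, inv_pow, mul_inv_eq_one₀ (pow_ne_zero m hw0)] at h
      have hz : w ^ ((k : ℤ) - m) = 1 := by
        rw [zpow_sub₀ hw0, zpow_natCast, zpow_natCast, h, div_self (pow_ne_zero m hw0)]
      have hdvd : (n : ℤ) ∣ (k : ℤ) - m := hprim.zpow_eq_one_iff_dvd _ |>.mp hz
      have habs : |(k : ℤ) - m| < n := by rw [abs_lt]; constructor <;> omega
      have h0 : (k : ℤ) - m = 0 := Int.eq_zero_of_abs_lt_dvd hdvd habs
      omega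
    rw [geom_sum_eq hu1, hun]
    simp [hkm]

theorem csc_squared_sum (n : ℕ) (hn : 2 ≤ n) :
    ∑ j ∈ Finset.Icc 1 (n - 1), (1 : ℝ) / (Real.sin (j * π / n)) ^ 2
      = ((n : ℝ) ^ 2 - 1) / 3 := by
  have hn0 : (n:ℂ) ≠ 0 := Nat.cast_ne_zero.mpr (by omega)
  apply Complex.ofReal_injective
  rw [Complex.ofReal_sum]
  set w : ℂ := Complex.exp (2 * Real.pi * Complex.I / n) with hw
  have step1 : ∑ j ∈ Finset.Icc 1 (n - 1),
        (((1 : ℝ) / (Real.sin (j * Real.pi / n)) ^ 2 : ℝ) : ℂ)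
      = ∑ j ∈ Finset.Icc 1 (n - 1), (4 / (n:ℂ)^2 * ∑ k ∈ Finset.range n,
          ∑ m ∈ Finset.range n, ((k:ℂ) * m) * ((w ^ k * w⁻¹ ^ m) ^ j)) :=
    Finset.sum_congr rfl fun j hj => by
      rw [Finset.mem_Icc] at hj
      exact perterm n hn j hj.1 hj.2
  rw [step1, ← Finset.mul_sum, Finset.sum_comm]
  have step2 : ∑ k ∈ Finset.range n, ∑ j ∈ Finset.Icc 1 (n - 1),
        ∑ m ∈ Finset.range n, ((k:ℂ) * m) * ((w ^ k * w⁻¹ ^ m) ^ j)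
      = ∑ k ∈ Finset.range n, ∑ m ∈ Finset.range n,
          ((k:ℂ) * m) * ((if k = m then (n:ℂ) else 0) - 1) := by
    refine Finset.sum_congr rfl fun k hk => ?_
    rw [Finset.sum_comm]
    refine Finset.sum_congr rfl fun m hm => ?_
    rw [← Finset.mul_sum, geo n hn k m (Finset.mem_range.mp hk) (Finset.mem_range.mp hm)]
  rw [step2]
  have step3 : ∑ k ∈ Finset.range n, ∑ m ∈ Finset.range n,
        ((k:ℂ) * m) * ((if k = m then (n:ℂ) else 0) - 1)
      = (n:ℂ) * (∑ k ∈ Finset.range n, (k:ℂ)^2)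
        - (∑ k ∈ Finset.range n, (k:ℂ)) * (∑ k ∈ Finset.range n, (k:ℂ)) := by
    have inner : ∀ k ∈ Finset.range n,
        ∑ m ∈ Finset.range n, ((k:ℂ) * m) * ((if k = m then (n:ℂ) else 0) - 1)
        = (n:ℂ) * (k:ℂ)^2 - (k:ℂ) * ∑ m ∈ Finset.range n, (m:ℂ) := by
      intro k hk
      have : ∀ m ∈ Finset.range n, ((k:ℂ) * m) * ((if k = m then (n:ℂ) else 0) - 1)
          = (if k = m then (k:ℂ) * m * n else 0) - (k:ℂ) * m := by
        intro m _
        by_cases h : k = m <;> simp [h] <;> ring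
      rw [Finset.sum_congr rfl this, Finset.sum_sub_distrib, Finset.sum_ite_eq,
        if_pos hk, ← Finset.mul_sum]
      ring
    rw [Finset.sum_congr rfl inner, Finset.sum_sub_distrib, ← Finset.mul_sum,
      ← Finset.sum_mul]
  rw [step3, aux_sq, aux_id]
  simp only [Complex.ofReal_div, Complex.ofReal_sub, Complex.ofReal_pow,
    Complex.ofReal_one, Complex.ofReal_ofNat, Complex.ofReal_natCast]
  field_simp
  ring
end

section
/- For every integer n ≥ 2, the sum over j = 1, …, n−1 of 1/sin⁴(jπ/n) equals (n²−1)(n²+11)/45. -/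
open Real Finset


private lemma telescope (z : ℂ) (f : ℕ → ℂ) (m : ℕ) :
    (z - 1) * ∑ k ∈ range m, f k * z ^ k
      = f m * z ^ m - f 0 - ∑ k ∈ range m, (f (k+1) - f k) * z ^ (k+1) := by
  induction m with
  | zero => simp
  | succ m ih =>
    rw [sum_range_succ, sum_range_succ, mul_add, ih]
    ring

private lemma per_root (n : ℕ) (ζ : ℂ) (h1 : ζ ^ n = 1) (h2 : ζ ≠ 1) :
    (∑ k ∈ range n, (k : ℂ) * ζ ^ k = n * (ζ - 1)⁻¹) ∧
    (∑ k ∈ range n, (k : ℂ) ^ 2 * ζ ^ k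
        = ((n:ℂ) ^ 2 - 2 * n) * (ζ - 1)⁻¹ - 2 * n * (ζ - 1)⁻¹ ^ 2) ∧
    (∑ k ∈ range n, (k : ℂ) ^ 3 * ζ ^ k
        = ((n:ℂ) ^ 3 - 3 * n ^ 2 + 3 * n) * (ζ - 1)⁻¹
          + (9 * n - 3 * (n:ℂ) ^ 2) * (ζ - 1)⁻¹ ^ 2 + 6 * n * (ζ - 1)⁻¹ ^ 3) ∧
    (∑ k ∈ range n, (k : ℂ) ^ 4 * ζ ^ k
        = ((n:ℂ) ^ 4 - 4 * n ^ 3 + 6 * n ^ 2 - 4 * n) * (ζ - 1)⁻¹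
          + (-4 * (n:ℂ) ^ 3 + 18 * n ^ 2 - 28 * n) * (ζ - 1)⁻¹ ^ 2
          + (12 * (n:ℂ) ^ 2 - 48 * n) * (ζ - 1)⁻¹ ^ 3 - 24 * n * (ζ - 1)⁻¹ ^ 4) := by
  set N : ℂ := (n : ℂ)
  set u : ℂ := (ζ - 1)⁻¹ with hudef
  have hv : ζ - 1 ≠ 0 := sub_ne_zero.mpr h2
  have hu : (ζ - 1) * u = 1 := mul_inv_cancel₀ hv
  have hg0 : ∑ k ∈ range n, ζ ^ k = 0 := by
    rw [geom_sum_eq h2, h1, sub_self, zero_div]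
  set S0 : ℂ := ∑ k ∈ range n, ζ ^ k
  set S1 : ℂ := ∑ k ∈ range n, (k : ℂ) * ζ ^ k
  set S2 : ℂ := ∑ k ∈ range n, (k : ℂ) ^ 2 * ζ ^ k
  set S3 : ℂ := ∑ k ∈ range n, (k : ℂ) ^ 3 * ζ ^ k
  set S4 : ℂ := ∑ k ∈ range n, (k : ℂ) ^ 4 * ζ ^ k
  -- correction sums
  have c1 : ∑ k ∈ range n, (((k+1 : ℕ) : ℂ) - (k : ℂ)) * ζ ^ (k+1) = ζ * S0 := by
    rw [mul_sum]
    exact sum_congr rfl fun k _ => by push_cast; ring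
  have c2 : ∑ k ∈ range n, (((k+1 : ℕ) : ℂ) ^ 2 - (k : ℂ) ^ 2) * ζ ^ (k+1)
      = 2 * ζ * S1 + ζ * S0 := by
    rw [mul_sum, mul_sum, ← sum_add_distrib]
    exact sum_congr rfl fun k _ => by push_cast; ring
  have c3 : ∑ k ∈ range n, (((k+1 : ℕ) : ℂ) ^ 3 - (k : ℂ) ^ 3) * ζ ^ (k+1)
      = 3 * ζ * S2 + 3 * ζ * S1 + ζ * S0 := by
    rw [mul_sum, mul_sum, mul_sum, ← sum_add_distrib, ← sum_add_distrib]
    exact sum_congr rfl fun k _ => by push_cast; ring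
  have c4 : ∑ k ∈ range n, (((k+1 : ℕ) : ℂ) ^ 4 - (k : ℂ) ^ 4) * ζ ^ (k+1)
      = 4 * ζ * S3 + 6 * ζ * S2 + 4 * ζ * S1 + ζ * S0 := by
    rw [mul_sum, mul_sum, mul_sum, mul_sum, ← sum_add_distrib, ← sum_add_distrib,
      ← sum_add_distrib]
    exact sum_congr rfl fun k _ => by push_cast; ring
  -- E relations
  have e1 : (ζ - 1) * S1 = N := by
    have := telescope ζ (fun k => (k : ℂ)) n
    simp only [h1] at this
    rw [this, c1, hg0]
    push_cast; ring
  have e2 : (ζ - 1) * S2 = N ^ 2 - 2 * ζ * S1 := by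
    have := telescope ζ (fun k => (k : ℂ) ^ 2) n
    simp only [h1] at this
    rw [this, c2, hg0]
    push_cast; ring
  have e3 : (ζ - 1) * S3 = N ^ 3 - 3 * ζ * S2 - 3 * ζ * S1 := by
    have := telescope ζ (fun k => (k : ℂ) ^ 3) n
    simp only [h1] at this
    rw [this, c3, hg0]
    push_cast; ring
  have e4 : (ζ - 1) * S4 = N ^ 4 - 4 * ζ * S3 - 6 * ζ * S2 - 4 * ζ * S1 := by
    have := telescope ζ (fun k => (k : ℂ) ^ 4) n
    simp only [h1] at this
    rw [this, c4, hg0]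
    push_cast; ring
  -- cleared forms
  have f2' : (ζ - 1) ^ 2 * S2 = (N ^ 2 - 2 * N) * (ζ - 1) - 2 * N := by
    linear_combination (ζ - 1) * e2 - 2 * ζ * e1
  have f3' : (ζ - 1) ^ 3 * S3
      = (N ^ 3 - 3 * N ^ 2 + 3 * N) * (ζ - 1) ^ 2 + (9 * N - 3 * N ^ 2) * (ζ - 1) + 6 * N := by
    linear_combination (ζ - 1) ^ 2 * e3 - 3 * ζ * f2' - 3 * ζ * (ζ - 1) * e1
  have f4' : (ζ - 1) ^ 4 * S4
      = (N ^ 4 - 4 * N ^ 3 + 6 * N ^ 2 - 4 * N) * (ζ - 1) ^ 3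
        + (-4 * N ^ 3 + 18 * N ^ 2 - 28 * N) * (ζ - 1) ^ 2
        + (12 * N ^ 2 - 48 * N) * (ζ - 1) - 24 * N := by
    linear_combination (ζ - 1) ^ 3 * e4 - 4 * ζ * f3' - 6 * ζ * (ζ - 1) * f2'
      - 4 * ζ * (ζ - 1) ^ 2 * e1
  -- u forms
  refine ⟨?_, ?_, ?_, ?_⟩
  · linear_combination u * e1 - S1 * hu
  · linear_combination u ^ 2 * f2' + (-(S2 * ((ζ - 1) * u + 1)) + (N ^ 2 - 2 * N) * u) * hu
  · linear_combination u ^ 3 * f3'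
      + (-(S3 * (((ζ - 1) * u) ^ 2 + (ζ - 1) * u + 1))
        + (N ^ 3 - 3 * N ^ 2 + 3 * N) * u * ((ζ - 1) * u + 1) + (9 * N - 3 * N ^ 2) * u ^ 2) * hu
  · linear_combination u ^ 4 * f4'
      + (-(S4 * (((ζ - 1) * u) ^ 3 + ((ζ - 1) * u) ^ 2 + (ζ - 1) * u + 1))
        + (N ^ 4 - 4 * N ^ 3 + 6 * N ^ 2 - 4 * N) * u * (((ζ - 1) * u) ^ 2 + (ζ - 1) * u + 1)
        + (-4 * N ^ 3 + 18 * N ^ 2 - 28 * N) * u ^ 2 * ((ζ - 1) * u + 1)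
        + (12 * N ^ 2 - 48 * N) * u ^ 3) * hu


private lemma Ksum1 (n : ℕ) : ∑ k ∈ range n, (k : ℂ) = n * (n - 1) / 2 := by
  induction n with
  | zero => simp
  | succ n ih => rw [sum_range_succ, ih]; push_cast; ring

private lemma Ksum2 (n : ℕ) : ∑ k ∈ range n, (k : ℂ) ^ 2 = n * (n - 1) * (2 * n - 1) / 6 := by
  induction n with
  | zero => simp
  | succ n ih => rw [sum_range_succ, ih]; push_cast; ring

private lemma Ksum3 (n : ℕ) : ∑ k ∈ range n, (k : ℂ) ^ 3 = n ^ 2 * (n - 1) ^ 2 / 4 := by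
  induction n with
  | zero => simp
  | succ n ih => rw [sum_range_succ, ih]; push_cast; ring

private lemma Ksum4 (n : ℕ) :
    ∑ k ∈ range n, (k : ℂ) ^ 4 = n * (n - 1) * (2 * n - 1) * (3 * n ^ 2 - 3 * n - 1) / 30 := by
  induction n with
  | zero => simp
  | succ n ih => rw [sum_range_succ, ih]; push_cast; ring


private lemma root_pow (n a : ℕ) (hn : 0 < n) :
    Complex.exp (2 * (π:ℂ) * Complex.I * a / n) ^ n = 1 := by
  rw [← Complex.exp_nat_mul]
  have hn0 : (n : ℂ) ≠ 0 := Nat.cast_ne_zero.mpr hn.ne'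
  have h : (n : ℂ) * (2 * (π:ℂ) * Complex.I * a / n) = a * (2 * π * Complex.I) := by
    field_simp
  rw [h]
  exact_mod_cast Complex.exp_int_mul_two_pi_mul_I a

private lemma root_ne_one (n a : ℕ) (h1 : 1 ≤ a) (h2 : a < n) :
    Complex.exp (2 * (π:ℂ) * Complex.I * a / n) ≠ 1 := by
  intro h
  rw [Complex.exp_eq_one_iff] at h
  obtain ⟨m, hm⟩ := h
  have hn0 : (n : ℂ) ≠ 0 := Nat.cast_ne_zero.mpr (by omega)
  have hI := Complex.I_ne_zero
  have hpi : (π : ℂ) ≠ 0 := Complex.ofReal_ne_zero.mpr Real.pi_ne_zero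
  have ha : (a : ℂ) = m * n := by
    field_simp at hm
    have hne : (2 * (π:ℂ) * Complex.I) ≠ 0 := by
      simp [hpi, hI]
    have h2 : (2 * (π:ℂ) * Complex.I) * (a : ℂ)
        = (2 * (π:ℂ) * Complex.I) * ((m : ℂ) * (n : ℂ)) := by linear_combination (2 * (π:ℂ) * Complex.I) * hm
    exact mul_left_cancel₀ hne h2
  have haz : (a : ℤ) = m * n := by exact_mod_cast ha
  have hd : (n : ℤ) ∣ (a : ℤ) := ⟨m, by linarith⟩
  have : n ∣ a := Int.ofNat_dvd.mp hd
  have := Nat.le_of_dvd (by omega) this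
  omega

private lemma sin_form (n j : ℕ) (hn : 2 ≤ n) (h1 : 1 ≤ j) (h2 : j < n) :
    ((1 / (Real.sin (j * π / n)) ^ 4 : ℝ) : ℂ)
      = 16 * ((Complex.exp (2 * (π:ℂ) * Complex.I * j / n) - 1)⁻¹) ^ 2
        + 32 * ((Complex.exp (2 * (π:ℂ) * Complex.I * j / n) - 1)⁻¹) ^ 3
        + 16 * ((Complex.exp (2 * (π:ℂ) * Complex.I * j / n) - 1)⁻¹) ^ 4 := by
  have hn0 : (n : ℂ) ≠ 0 := Nat.cast_ne_zero.mpr (by omega)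
  set w : ℂ := Complex.exp ((π:ℂ) * Complex.I * j / n) with hwdef
  have hw0 : w ≠ 0 := Complex.exp_ne_zero _
  have hz : Complex.exp (2 * (π:ℂ) * Complex.I * j / n) = w ^ 2 := by
    rw [hwdef, ← Complex.exp_nat_mul]
    congr 1
    push_cast
    ring
  have hzne : w ^ 2 ≠ 1 := hz ▸ root_ne_one n j h1 h2
  have hv : w ^ 2 - 1 ≠ 0 := sub_ne_zero.mpr hzne
  have hs : ((Real.sin (j * π / n) : ℝ) : ℂ) = (w⁻¹ - w) * Complex.I / 2 := by
    rw [Complex.ofReal_sin]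
    show (Complex.exp (-(((j : ℝ) * π / n : ℝ) : ℂ) * Complex.I)
        - Complex.exp ((((j : ℝ) * π / n : ℝ) : ℂ) * Complex.I)) * Complex.I / 2 = _
    rw [← Complex.exp_neg]
    congr 3
    · congr 1
      push_cast
      ring
    · rw [hwdef]
      congr 1
      push_cast
      ring
  have h16 : (w ^ 2 - 1) ^ 4 = 16 * (w ^ 2) ^ 2 * (((Real.sin (j * π / n) : ℝ)) : ℂ) ^ 4 := by
    rw [hs]
    have hI4 : Complex.I ^ 4 = 1 := by
      simp [pow_succ, Complex.I_mul_I]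
    field_simp
    ring_nf
    rw [hI4]
    ring
  -- final
  have hsne : (((Real.sin (j * π / n) : ℝ)) : ℂ) ≠ 0 := by
    intro h0
    rw [h0] at h16
    simp only [ne_eq, OfNat.ofNat_ne_zero, not_false_eq_true, zero_pow, mul_zero,
      pow_eq_zero_iff] at h16
    exact hv h16
  rw [hz, Complex.ofReal_div, Complex.ofReal_one, Complex.ofReal_pow]
  set S : ℂ := ((Real.sin ((j:ℝ) * π / (n:ℝ)) : ℝ) : ℂ) with hSdef
  clear_value S
  field_simp [hv]
  linear_combination h16


theorem csc_fourth_sum (n : ℕ) (hn : 2 ≤ n) :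
    ∑ j ∈ Finset.Icc 1 (n - 1), (1 : ℝ) / (Real.sin (j * π / n)) ^ 4
      = ((n : ℝ) ^ 2 - 1) * ((n : ℝ) ^ 2 + 11) / 45 := by
  have hn0 : (n : ℂ) ≠ 0 := Nat.cast_ne_zero.mpr (by omega)
  set N : ℂ := (n : ℂ) with hN
  have hmem : ∀ j ∈ Icc 1 (n-1), 1 ≤ j ∧ j < n := by
    intro j hj
    rw [mem_Icc] at hj
    omega
  have hins : insert 0 (Icc 1 (n-1)) = range n := by
    ext x
    simp only [mem_insert, mem_Icc, mem_range]
    omega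
  have cross : ∀ k, 1 ≤ k → k < n →
      ∑ j ∈ Icc 1 (n-1), (Complex.exp (2*(π:ℂ)*Complex.I*j/n))^k = -1 := by
    intro k hk1 hk2
    have hswap : ∀ j : ℕ, (Complex.exp (2*(π:ℂ)*Complex.I*(j:ℕ)/n))^k
        = (Complex.exp (2*(π:ℂ)*Complex.I*k/n))^j := by
      intro j
      rw [← Complex.exp_nat_mul, ← Complex.exp_nat_mul]
      congr 1
      ring
    simp only [hswap]
    have hgeom : ∑ j ∈ range n, (Complex.exp (2*(π:ℂ)*Complex.I*k/n))^j = 0 := by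
      rw [geom_sum_eq (root_ne_one n k hk1 hk2), root_pow n k (by omega), sub_self, zero_div]
    rw [← hins, sum_insert (by simp)] at hgeom
    linear_combination hgeom
  have sums : ∀ f : ℕ → ℂ, f 0 = 0 →
      ∑ j ∈ Icc 1 (n-1), ∑ k ∈ range n, f k * (Complex.exp (2*(π:ℂ)*Complex.I*j/n))^k
        = - ∑ k ∈ range n, f k := by
    intro f hf0
    rw [Finset.sum_comm]
    have step : ∀ k ∈ range n,
        ∑ j ∈ Icc 1 (n-1), f k * (Complex.exp (2*(π:ℂ)*Complex.I*j/n))^k = -(f k) := by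
      intro k hk
      rw [← mul_sum]
      rcases Nat.eq_zero_or_pos k with h | h
      · rw [h, hf0]
        ring
      · rw [cross k h (mem_range.mp hk)]
        ring
    rw [sum_congr rfl step]
    rw [Finset.sum_neg_distrib]
  have hpr : ∀ j ∈ Icc 1 (n-1), _ := fun j hj =>
    per_root n (Complex.exp (2*(π:ℂ)*Complex.I*j/n))
      (root_pow n j (by omega)) (root_ne_one n j (hmem j hj).1 (hmem j hj).2)
  -- q1
  have q1 : ∑ j ∈ Icc 1 (n-1), N * (Complex.exp (2*(π:ℂ)*Complex.I*j/n) - 1)⁻¹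
      = -(N*(N-1)/2) :=
    calc ∑ j ∈ Icc 1 (n-1), N * (Complex.exp (2*(π:ℂ)*Complex.I*j/n) - 1)⁻¹
        = ∑ j ∈ Icc 1 (n-1), ∑ k ∈ range n,
            (k : ℂ) * (Complex.exp (2*(π:ℂ)*Complex.I*j/n))^k :=
          sum_congr rfl fun j hj => ((hpr j hj).1).symm
      _ = - ∑ k ∈ range n, (k : ℂ) := sums (fun k => (k : ℂ)) (by norm_num)
      _ = -(N*(N-1)/2) := by rw [Ksum1]
  have q2 : ∑ j ∈ Icc 1 (n-1), ((N^2 - 2*N) * (Complex.exp (2*(π:ℂ)*Complex.I*j/n) - 1)⁻¹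
        - 2*N * (Complex.exp (2*(π:ℂ)*Complex.I*j/n) - 1)⁻¹^2)
      = -(N*(N-1)*(2*N-1)/6) :=
    calc _ = ∑ j ∈ Icc 1 (n-1), ∑ k ∈ range n,
            (k : ℂ)^2 * (Complex.exp (2*(π:ℂ)*Complex.I*j/n))^k :=
          sum_congr rfl fun j hj => ((hpr j hj).2.1).symm
      _ = - ∑ k ∈ range n, (k : ℂ)^2 := sums (fun k => (k : ℂ)^2) (by norm_num)
      _ = -(N*(N-1)*(2*N-1)/6) := by rw [Ksum2]
  have q3 : ∑ j ∈ Icc 1 (n-1), ((N^3 - 3*N^2 + 3*N) * (Complex.exp (2*(π:ℂ)*Complex.I*j/n) - 1)⁻¹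
        + (9*N - 3*N^2) * (Complex.exp (2*(π:ℂ)*Complex.I*j/n) - 1)⁻¹^2
        + 6*N * (Complex.exp (2*(π:ℂ)*Complex.I*j/n) - 1)⁻¹^3)
      = -(N^2*(N-1)^2/4) :=
    calc _ = ∑ j ∈ Icc 1 (n-1), ∑ k ∈ range n,
            (k : ℂ)^3 * (Complex.exp (2*(π:ℂ)*Complex.I*j/n))^k :=
          sum_congr rfl fun j hj => ((hpr j hj).2.2.1).symm
      _ = - ∑ k ∈ range n, (k : ℂ)^3 := sums (fun k => (k : ℂ)^3) (by norm_num)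
      _ = -(N^2*(N-1)^2/4) := by rw [Ksum3]
  have q4 : ∑ j ∈ Icc 1 (n-1), ((N^4 - 4*N^3 + 6*N^2 - 4*N) * (Complex.exp (2*(π:ℂ)*Complex.I*j/n) - 1)⁻¹
        + (-4*N^3 + 18*N^2 - 28*N) * (Complex.exp (2*(π:ℂ)*Complex.I*j/n) - 1)⁻¹^2
        + (12*N^2 - 48*N) * (Complex.exp (2*(π:ℂ)*Complex.I*j/n) - 1)⁻¹^3
        - 24*N * (Complex.exp (2*(π:ℂ)*Complex.I*j/n) - 1)⁻¹^4)
      = -(N*(N-1)*(2*N-1)*(3*N^2-3*N-1)/30) :=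
    calc _ = ∑ j ∈ Icc 1 (n-1), ∑ k ∈ range n,
            (k : ℂ)^4 * (Complex.exp (2*(π:ℂ)*Complex.I*j/n))^k :=
          sum_congr rfl fun j hj => ((hpr j hj).2.2.2).symm
      _ = - ∑ k ∈ range n, (k : ℂ)^4 := sums (fun k => (k : ℂ)^4) (by norm_num)
      _ = -(N*(N-1)*(2*N-1)*(3*N^2-3*N-1)/30) := by rw [Ksum4]
  rw [← mul_sum] at q1
  rw [sum_sub_distrib, ← mul_sum, ← mul_sum] at q2
  rw [sum_add_distrib, sum_add_distrib, ← mul_sum, ← mul_sum, ← mul_sum] at q3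
  rw [sum_sub_distrib, sum_add_distrib, sum_add_distrib,
    ← mul_sum, ← mul_sum, ← mul_sum, ← mul_sum] at q4
  have hR1 : ∑ j ∈ Icc 1 (n-1), (Complex.exp (2*(π:ℂ)*Complex.I*j/n) - 1)⁻¹
      = -((N-1)/2) :=
    mul_left_cancel₀ hn0 (by linear_combination q1)
  have hR2 : ∑ j ∈ Icc 1 (n-1), (Complex.exp (2*(π:ℂ)*Complex.I*j/n) - 1)⁻¹^2
      = -((N-1)*(N-5)/12) :=
    mul_left_cancel₀ (show (2*N : ℂ) ≠ 0 by simp [hn0])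
      (by linear_combination -q2 + (N^2-2*N)*hR1)
  have hR3 : ∑ j ∈ Icc 1 (n-1), (Complex.exp (2*(π:ℂ)*Complex.I*j/n) - 1)⁻¹^3
      = (N-1)*(N-3)/8 :=
    mul_left_cancel₀ (show (6*N : ℂ) ≠ 0 by simp [hn0])
      (by linear_combination q3 - (N^3-3*N^2+3*N)*hR1 - (9*N-3*N^2)*hR2)
  have hR4 : ∑ j ∈ Icc 1 (n-1), (Complex.exp (2*(π:ℂ)*Complex.I*j/n) - 1)⁻¹^4
      = (N^4 - 110*N^2 + 360*N - 251)/720 :=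
    mul_left_cancel₀ (show (24*N : ℂ) ≠ 0 by simp [hn0])
      (by linear_combination -q4 + (N^4-4*N^3+6*N^2-4*N)*hR1
        + (-4*N^3+18*N^2-28*N)*hR2 + (12*N^2-48*N)*hR3)
  rw [← Complex.ofReal_inj, Complex.ofReal_sum]
  rw [sum_congr rfl (fun j hj => sin_form n j hn (hmem j hj).1 (hmem j hj).2)]
  rw [sum_add_distrib, sum_add_distrib, ← mul_sum, ← mul_sum, ← mul_sum]
  rw [hR2, hR3, hR4]
  push_cast
  ring
end

section
/- For every integer n ≥ 2, the sum over j = 1, …, n−1 of 1/sin⁶(jπ/n) equals (2n⁶ + 21n⁴ + 168n² − 191)/945. -/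
open Real Finset

private lemma chooseCast (n k : ℕ) :
    (n.choose k : ℂ) * (k.factorial : ℂ) = ∏ i ∈ Finset.range k, ((n : ℂ) - i) := by
  induction k with
  | zero => simp
  | succ k ih =>
    rw [Finset.prod_range_succ, ← ih]
    rcases le_or_gt k n with h1 | h1
    · have hc : (n.choose (k+1) : ℂ) * (k+1) = (n.choose k) * ((n:ℂ) - k) := by
        have h := Nat.choose_succ_right_eq n k
        have : ((n - k : ℕ) : ℂ) = (n : ℂ) - k := by push_cast [h1]; ring
        rw [← this]
        exact_mod_cast congrArg (Nat.cast : ℕ → ℂ) h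
      rw [Nat.factorial_succ]
      push_cast
      calc (n.choose (k+1) : ℂ) * ((k+1) * k.factorial)
          = ((n.choose (k+1) : ℂ) * (k+1)) * k.factorial := by ring
        _ = (n.choose k) * ((n:ℂ) - k) * k.factorial := by rw [hc]
        _ = _ := by ring
    · have h2 : n.choose (k+1) = 0 := Nat.choose_eq_zero_of_lt (by omega)
      have h3 : n.choose k = 0 := Nat.choose_eq_zero_of_lt h1
      simp [h2, h3]

private lemma scalarNewton {σ : Type*} [Fintype σ] [DecidableEq σ] (f : σ → ℂ) (k : ℕ)
    (hk : 0 < k) :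
    ∑ j, f j ^ k = (-1) ^ (k + 1) * k * ((Finset.univ.val.map f).esymm k) -
      ∑ a ∈ (Finset.HasAntidiagonal.antidiagonal k).filter (fun a => 0 < a.1 ∧ a.1 < k),
        (-1) ^ a.1 * ((Finset.univ.val.map f).esymm a.1) * ∑ j, f j ^ a.2 := by
  have h := congrArg (MvPolynomial.aeval f) (MvPolynomial.psum_eq_mul_esymm_sub_sum σ ℂ k hk)
  simp only [MvPolynomial.psum, map_sub, map_mul, map_sum, map_pow, MvPolynomial.aeval_X,
    map_neg, map_one, map_natCast, MvPolynomial.aeval_esymm_eq_multiset_esymm, Set.mem_Ioo] at h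
  convert h using 2

private lemma sinSq (θ : ℂ) :
    Complex.sin θ ^ 2
      = -(Complex.exp (θ * Complex.I) ^ 2 - 1) ^ 2 / (4 * Complex.exp (θ * Complex.I) ^ 2) := by
  have h1 := Complex.sin_sq_add_cos_sq θ
  have h := Complex.exp_ne_zero (θ * Complex.I)
  rw [Complex.cos, neg_mul, Complex.exp_neg] at h1
  field_simp at h1
  rw [eq_div_iff (by simp [h] : (4 : ℂ) * Complex.exp (θ * Complex.I) ^ 2 ≠ 0)]
  linear_combination h1

private lemma termAlg (v u : ℂ) (hv : v ≠ 0) (hu : v * u = 1) :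
    1 / (-(v ^ 6) / (64 * (v + 1) ^ 3))
      = -64 * (u ^ 6 + 3 * u ^ 5 + 3 * u ^ 4 + u ^ 3) := by
  rw [one_div_div, div_eq_iff (neg_ne_zero.mpr (pow_ne_zero 6 hv))]
  linear_combination (-64 * ((v*u)^5 + (1+3*v)*(v*u)^4 + (1+3*v+3*v^2)*(v*u)^3
    + (v+1)^3*(v*u)^2 + (v+1)^3*(v*u) + (v+1)^3)) * hu

theorem csc_sixth_sum (n : ℕ) (hn : 2 ≤ n) :
    ∑ j ∈ Finset.Icc 1 (n - 1), (1 : ℝ) / (Real.sin (j * π / n)) ^ 6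
      = (2 * (n : ℝ) ^ 6 + 21 * (n : ℝ) ^ 4 + 168 * (n : ℝ) ^ 2 - 191) / 945 := by
  have hν : (n : ℂ) ≠ 0 := Nat.cast_ne_zero.mpr (by omega)
  set ζ : ℂ := Complex.exp (2 * π * Complex.I / n) with hζdef
  have hprim : IsPrimitiveRoot ζ n := Complex.isPrimitiveRoot_exp n (by omega)
  have hζn : ζ ^ n = 1 := hprim.pow_eq_one
  set f : Fin (n-1) → ℂ := fun i => (ζ ^ ((i : ℕ) + 1) - 1)⁻¹ with hfdef
  have hωne1 : ∀ i : Fin (n-1), ζ ^ ((i : ℕ) + 1) ≠ 1 := by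
    intro i h
    have hi : (i : ℕ) + 1 < n := by have := i.2; omega
    have := hprim.pow_inj (by omega : (0:ℕ) < n) hi ?_ 
    · omega
    · rw [pow_zero, h]
  have hωn : ∀ i : Fin (n-1), (ζ ^ ((i : ℕ) + 1)) ^ n = 1 := by
    intro i
    rw [← pow_mul, mul_comm, pow_mul, hζn, one_pow]
  have hω0 : ∀ i : Fin (n-1), ζ ^ ((i : ℕ) + 1) ≠ 0 := by
    intro i h
    have := hωn i
    rw [h] at this
    simp [zero_pow (by omega : n ≠ 0)] at this
  -- the polynomial
  set P : Polynomial ℂ := ∑ k ∈ range n, Polynomial.C (n.choose k : ℂ) * Polynomial.X ^ k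
    with hPdef
  have hcoeff : ∀ k, P.coeff k = if k < n then (n.choose k : ℂ) else 0 := by
    intro k
    rw [hPdef, Polynomial.finset_sum_coeff]
    simp only [Polynomial.coeff_C_mul, Polynomial.coeff_X_pow, mul_ite, mul_one, mul_zero]
    rw [Finset.sum_ite_eq (range n) k (fun k => (n.choose k : ℂ))]
    simp [Finset.mem_range]
  have hchs : n.choose (n-1) = n := by
    have h := Nat.choose_symm (show 1 ≤ n by omega)
    simpa using h
  have hdeg : P.natDegree = n - 1 := by
    have h1 : P.natDegree ≤ n - 1 := by
      apply Polynomial.natDegree_le_iff_coeff_eq_zero.mpr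
      intro k hk
      rw [hcoeff]
      simp only [ite_eq_right_iff]
      intro h2; exfalso; omega
    have h2 : P.coeff (n - 1) ≠ 0 := by
      rw [hcoeff]
      have h3 : n - 1 < n := by omega
      simp only [h3, if_true, hchs]
      exact hν
    exact le_antisymm h1 (Polynomial.le_natDegree_of_ne_zero h2)
  have hlead : P.leadingCoeff = n := by
    rw [Polynomial.leadingCoeff, hdeg, hcoeff]
    simp only [show n - 1 < n by omega, if_true, hchs]
  have hP0 : P ≠ 0 := fun h => hν (by rw [← hlead, h]; simp)
  have heval : ∀ u : ℂ, P.eval u = (u + 1) ^ n - u ^ n := by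
    intro u
    rw [hPdef]
    simp only [Polynomial.eval_finset_sum, Polynomial.eval_mul, Polynomial.eval_C,
      Polynomial.eval_pow, Polynomial.eval_X]
    rw [add_pow u 1 n, Finset.sum_range_succ]
    simp [Nat.choose_self, mul_comm]
  -- roots
  set M : Multiset ℂ := Finset.univ.val.map f with hMdef
  have hMcard : Multiset.card M = n - 1 := by
    rw [hMdef, Multiset.card_map]
    simp
  have hfinj : Function.Injective f := by
    intro i j h
    rw [hfdef] at h
    have h2 : ζ ^ ((i : ℕ) + 1) = ζ ^ ((j : ℕ) + 1) := by
      have hi := sub_ne_zero.mpr (hωne1 i)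
      have hj := sub_ne_zero.mpr (hωne1 j)
      have := inv_injective h
      have := sub_left_injective this
      linear_combination this
    have hi : (i : ℕ) + 1 < n := by have := i.2; omega
    have hj : (j : ℕ) + 1 < n := by have := j.2; omega
    have := hprim.pow_inj hi hj h2
    exact Fin.ext (by omega)
  have hMnodup : M.Nodup := Multiset.Nodup.map hfinj Finset.univ.nodup
  have hroot : ∀ i : Fin (n-1), P.eval (f i) = 0 := by
    intro i
    rw [heval]
    set ω := ζ ^ ((i : ℕ) + 1)
    have hne : ω - 1 ≠ 0 := sub_ne_zero.mpr (hωne1 i)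
    have key : f i + 1 = ω * f i := by
      rw [hfdef]; show (ω - 1)⁻¹ + 1 = ω * (ω - 1)⁻¹
      field_simp
      ring
    rw [key, mul_pow, hωn i, one_mul, sub_self]
  have hroots : P.roots = M := by
    have hcard : Multiset.card P.roots = n - 1 := by
      rw [Polynomial.splits_iff_card_roots.mp (IsAlgClosed.splits P), hdeg]
    have hle : M ≤ P.roots := by
      rw [Multiset.le_iff_subset hMnodup]
      intro a ha
      rw [hMdef] at ha
      obtain ⟨i, _, rfl⟩ := Multiset.mem_map.mp ha
      exact (Polynomial.mem_roots hP0).mpr (hroot i)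
    exact (Multiset.eq_of_le_of_card_le hle (by omega)).symm
  -- esymm values
  have hE : ∀ d : ℕ, M.esymm d = (-1 : ℂ) ^ d * (n.choose (d+1) : ℂ) / n := by
    intro d
    rcases le_or_gt d (n-1) with hd | hd
    · have hk : n - 1 - (n - 1 - d) = d := by omega
      have h := Polynomial.coeff_eq_esymm_roots_of_splits
        (IsAlgClosed.splits P) (show n - 1 - d ≤ P.natDegree by rw [hdeg]; omega)
      rw [hdeg, hk, hlead, hroots, hcoeff] at h
      have h2 : n - 1 - d < n := by omega
      rw [if_pos h2] at h
      have h3 : n.choose (n - 1 - d) = n.choose (d+1) := by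
        have : n - 1 - d = n - (d+1) := by omega
        rw [this, Nat.choose_symm (by omega)]
      rw [h3] at h
      have h4 : ((-1:ℂ)^d)^2 = 1 := by
        rw [← pow_mul, mul_comm d 2, pow_mul]; norm_num
      rw [h, show (-1:ℂ)^d * ((n:ℂ)*(-1)^d*M.esymm d) = (((-1:ℂ)^d)^2) * M.esymm d * (n:ℂ)
        from by ring, h4, one_mul, mul_div_assoc, div_self hν, mul_one]
    · have h1 : M.esymm d = 0 := by
        rw [Multiset.esymm, Multiset.powersetCard_eq_empty d (by omega)]
        simp
      have h2 : n.choose (d+1) = 0 := Nat.choose_eq_zero_of_lt (by omega)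
      rw [h1, h2]
      simp
  -- explicit binomials
  have hB : ∀ k : ℕ, (n.choose (k+1) : ℂ) * ((k+1).factorial : ℂ)
      = ∏ i ∈ Finset.range (k+1), ((n : ℂ) - i) := fun k => chooseCast n (k+1)
  have hE1 : M.esymm 1 = -(((n:ℂ) - 1)) / 2 := by
    have h := chooseCast n 2
    rw [hE 1]
    simp only [Finset.prod_range_succ, Finset.prod_range_zero, one_mul] at h
    norm_num [Nat.factorial] at h ⊢
    field_simp
    linear_combination -h
  have hE2 : M.esymm 2 = ((n:ℂ) - 1) * ((n:ℂ) - 2) / 6 := by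
    have h := chooseCast n 3
    rw [hE 2]
    simp only [Finset.prod_range_succ, Finset.prod_range_zero, one_mul] at h
    norm_num [Nat.factorial] at h ⊢
    field_simp
    linear_combination h
  have hE3 : M.esymm 3 = -(((n:ℂ) - 1) * ((n:ℂ) - 2) * ((n:ℂ) - 3)) / 24 := by
    have h := chooseCast n 4
    rw [hE 3]
    simp only [Finset.prod_range_succ, Finset.prod_range_zero, one_mul] at h
    norm_num [Nat.factorial] at h ⊢
    field_simp
    linear_combination -h
  have hE4 : M.esymm 4 = ((n:ℂ) - 1) * ((n:ℂ) - 2) * ((n:ℂ) - 3) * ((n:ℂ) - 4) / 120 := by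
    have h := chooseCast n 5
    rw [hE 4]
    simp only [Finset.prod_range_succ, Finset.prod_range_zero, one_mul] at h
    norm_num [Nat.factorial] at h ⊢
    field_simp
    linear_combination h
  have hE5 : M.esymm 5
      = -(((n:ℂ) - 1) * ((n:ℂ) - 2) * ((n:ℂ) - 3) * ((n:ℂ) - 4) * ((n:ℂ) - 5)) / 720 := by
    have h := chooseCast n 6
    rw [hE 5]
    simp only [Finset.prod_range_succ, Finset.prod_range_zero, one_mul] at h
    norm_num [Nat.factorial] at h ⊢
    field_simp
    linear_combination -h
  have hE6 : M.esymm 6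
      = ((n:ℂ) - 1) * ((n:ℂ) - 2) * ((n:ℂ) - 3) * ((n:ℂ) - 4) * ((n:ℂ) - 5) * ((n:ℂ) - 6)
        / 5040 := by
    have h := chooseCast n 7
    rw [hE 6]
    simp only [Finset.prod_range_succ, Finset.prod_range_zero, one_mul] at h
    norm_num [Nat.factorial] at h ⊢
    field_simp
    linear_combination h
  -- Newton power sums
  have hfilter1 : (Finset.HasAntidiagonal.antidiagonal 1).filter (fun a => 0 < a.1 ∧ a.1 < 1) = ∅ := by decide
  have hfilter2 : (Finset.HasAntidiagonal.antidiagonal 2).filter (fun a => 0 < a.1 ∧ a.1 < 2) = {(1,1)} := by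
    decide
  have hfilter3 : (Finset.HasAntidiagonal.antidiagonal 3).filter (fun a => 0 < a.1 ∧ a.1 < 3)
      = {(1,2),(2,1)} := by decide
  have hfilter4 : (Finset.HasAntidiagonal.antidiagonal 4).filter (fun a => 0 < a.1 ∧ a.1 < 4)
      = {(1,3),(2,2),(3,1)} := by decide
  have hfilter5 : (Finset.HasAntidiagonal.antidiagonal 5).filter (fun a => 0 < a.1 ∧ a.1 < 5)
      = {(1,4),(2,3),(3,2),(4,1)} := by decide
  have hfilter6 : (Finset.HasAntidiagonal.antidiagonal 6).filter (fun a => 0 < a.1 ∧ a.1 < 6)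
      = {(1,5),(2,4),(3,3),(4,2),(5,1)} := by decide
  have hp1 : ∑ j, f j ^ 1 = (1 - (n:ℂ)) / 2 := by
    have h := scalarNewton f 1 (by norm_num)
    rw [hfilter1, Finset.sum_empty, hE1] at h
    rw [h]; ring
  have hp2 : ∑ j, f j ^ 2 = (-5 + 6 * (n:ℂ) - (n:ℂ)^2) / 12 := by
    have h := scalarNewton f 2 (by norm_num)
    rw [hfilter2, Finset.sum_singleton, hE2, hE1, hp1] at h
    rw [h]; ring
  have hp3 : ∑ j, f j ^ 3 = (3 - 4 * (n:ℂ) + (n:ℂ)^2) / 8 := by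
    have h := scalarNewton f 3 (by norm_num)
    rw [hfilter3] at h
    rw [Finset.sum_insert (by decide), Finset.sum_singleton] at h
    rw [hE3, hE2, hE1, hp1, hp2] at h
    rw [h]; ring
  have hp4 : ∑ j, f j ^ 4
      = (-251 + 360 * (n:ℂ) - 110 * (n:ℂ)^2 + (n:ℂ)^4) / 720 := by
    have h := scalarNewton f 4 (by norm_num)
    rw [hfilter4] at h
    rw [Finset.sum_insert (by decide), Finset.sum_insert (by decide),
      Finset.sum_singleton] at h
    rw [hE4, hE3, hE2, hE1, hp1, hp2, hp3] at h
    rw [h]; ring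
  have hp5 : ∑ j, f j ^ 5
      = (95 - 144 * (n:ℂ) + 50 * (n:ℂ)^2 - (n:ℂ)^4) / 288 := by
    have h := scalarNewton f 5 (by norm_num)
    rw [hfilter5] at h
    rw [Finset.sum_insert (by decide), Finset.sum_insert (by decide),
      Finset.sum_insert (by decide), Finset.sum_singleton] at h
    rw [hE5, hE4, hE3, hE2, hE1, hp1, hp2, hp3, hp4] at h
    rw [h]; ring
  have hp6 : ∑ j, f j ^ 6
      = (-19087 + 30240 * (n:ℂ) - 11508 * (n:ℂ)^2 + 357 * (n:ℂ)^4 - 2 * (n:ℂ)^6) / 60480 := by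
    have h := scalarNewton f 6 (by norm_num)
    rw [hfilter6] at h
    rw [Finset.sum_insert (by decide), Finset.sum_insert (by decide),
      Finset.sum_insert (by decide), Finset.sum_insert (by decide),
      Finset.sum_singleton] at h
    rw [hE6, hE5, hE4, hE3, hE2, hE1, hp1, hp2, hp3, hp4, hp5] at h
    rw [h]; ring
  -- per-term trig identity
  have hterm : ∀ i : Fin (n-1),
      (1 : ℂ) / Complex.sin ((1 + (i:ℕ) : ℕ) * (π:ℂ) / n) ^ 6
        = -64 * (f i ^ 6 + 3 * f i ^ 5 + 3 * f i ^ 4 + f i ^ 3) := by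
    intro i
    set θ : ℂ := ((1 + (i:ℕ) : ℕ) : ℂ) * (π:ℂ) / n with hθdef
    set ω := ζ ^ ((i : ℕ) + 1) with hωdef
    have hexp : Complex.exp (θ * Complex.I) ^ 2 = ω := by
      rw [hωdef, hζdef, hθdef, ← Complex.exp_nat_mul, ← Complex.exp_nat_mul]
      congr 1
      push_cast
      field_simp
      ring
    have hne : ω - 1 ≠ 0 := sub_ne_zero.mpr (hωne1 i)
    have hsin : Complex.sin θ ^ 2 = -(ω - 1) ^ 2 / (4 * ω) := by
      rw [sinSq, hexp]
    have h6 : Complex.sin θ ^ 6 = -((ω - 1) ^ 6) / (64 * ((ω - 1) + 1) ^ 3) := by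
      rw [show (6:ℕ) = 2*3 by norm_num, pow_mul, hsin, div_pow,
        show (-(ω - 1) ^ 2) ^ 3 = -((ω - 1) ^ 6) by ring,
        show (4 * ω) ^ 3 = 64 * ((ω - 1) + 1) ^ 3 by ring]
    rw [h6]
    exact termAlg (ω - 1) (f i) hne (mul_inv_cancel₀ hne)
  -- assemble
  rw [← Complex.ofReal_inj]
  push_cast
  rw [Finset.Icc_sub_one_right_eq_Ico_of_not_isMin
    (by simpa [isMin_iff_eq_bot] using (show n ≠ 0 by omega)) 1, Finset.sum_Ico_eq_sum_range]
  rw [← Fin.sum_univ_eq_sum_range (fun i => (1:ℂ) / Complex.sin ((1 + i : ℕ) * (π:ℂ) / n) ^ 6)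
    (n-1)]
  rw [Finset.sum_congr rfl (fun i _ => hterm i)]
  calc ∑ i : Fin (n-1), -64 * (f i ^ 6 + 3 * f i ^ 5 + 3 * f i ^ 4 + f i ^ 3)
      = -64 * ∑ i : Fin (n-1), (f i ^ 6 + 3 * f i ^ 5 + 3 * f i ^ 4 + f i ^ 3) := by
        rw [Finset.mul_sum]
    _ = -64 * ((∑ i, f i ^ 6) + 3 * (∑ i, f i ^ 5) + 3 * (∑ i, f i ^ 4) + ∑ i, f i ^ 3) := by
        rw [Finset.sum_add_distrib, Finset.sum_add_distrib, Finset.sum_add_distrib,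
          ← Finset.mul_sum, ← Finset.mul_sum]
    _ = (2 * (n:ℂ) ^ 6 + 21 * (n:ℂ) ^ 4 + 168 * (n:ℂ) ^ 2 - 191) / 945 := by
        rw [hp6, hp5, hp4, hp3]; ring
end

section
/- For every nonnegative integer k, the genus-2, rank-2 Verlinde number k² · ((k+2)/2) · Σ_{j=1}^{k+1} 1/sin²(jπ/(k+2)) equals k²(k+1)(k+2)(k+3)/6, and in particular is a nonnegative integer. -/
open Real Finset

namespace VerlindeAux
open Complex

lemma poly_id (z : ℂ) (N : ℕ) :
    (1 - z) * ∑ m ∈ Finset.range N, (m : ℂ) * z ^ m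
      = (∑ m ∈ Finset.range N, z ^ m) - 1 - ((N : ℂ) - 1) * z ^ N := by
  induction N with
  | zero => simp
  | succ N ih =>
    rw [Finset.sum_range_succ, Finset.sum_range_succ (f := fun m => z ^ m), mul_add, ih]
    push_cast
    ring

lemma sum_range_cast (n : ℕ) : ∑ m ∈ Finset.range n, (m : ℂ) = n * (n - 1) / 2 := by
  induction n with
  | zero => simp
  | succ N ih => rw [Finset.sum_range_succ, ih]; push_cast; ring

lemma sum_range_sq_cast (n : ℕ) :
    ∑ m ∈ Finset.range n, (m : ℂ) ^ 2 = n * (n - 1) * (2 * n - 1) / 6 := by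
  induction n with
  | zero => simp
  | succ N ih => rw [Finset.sum_range_succ, ih]; push_cast; ring

lemma csc_sum (n : ℕ) (hn : 2 ≤ n) :
    ∑ j ∈ Finset.Icc 1 (n - 1), (1 : ℝ) / (Real.sin (j * Real.pi / n)) ^ 2
      = ((n : ℝ) ^ 2 - 1) / 3 := by
  have hn0 : (n : ℕ) ≠ 0 := by omega
  have hnC : (n : ℂ) ≠ 0 := by exact_mod_cast hn0
  set ω : ℂ := Complex.exp (2 * Real.pi * I / n) with hω
  have hprim : IsPrimitiveRoot ω n := Complex.isPrimitiveRoot_exp n hn0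
  have hωn : ω ^ n = 1 := hprim.pow_eq_one
  -- geometric sums
  have hgeom : ∀ r : ℕ, ∑ j ∈ Finset.range n, ω ^ (j * r) = if n ∣ r then (n : ℂ) else 0 := by
    intro r
    have hrw : ∀ j : ℕ, ω ^ (j * r) = (ω ^ r) ^ j := by
      intro j; rw [← pow_mul, Nat.mul_comm]
    simp only [hrw]
    by_cases h : n ∣ r
    · rw [if_pos h]
      have : ω ^ r = 1 := (hprim.pow_eq_one_iff_dvd r).2 h
      simp [this]
    · rw [if_neg h]
      have hne : ω ^ r ≠ 1 := fun hc => h ((hprim.pow_eq_one_iff_dvd r).1 hc)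
      rw [geom_sum_eq hne]
      have : (ω ^ r) ^ n = 1 := by rw [← pow_mul, Nat.mul_comm, pow_mul, hωn, one_pow]
      rw [this]; simp
  have hIcc : ∀ r : ℕ, ∑ j ∈ Finset.Icc 1 (n - 1), ω ^ (j * r)
      = (if n ∣ r then (n : ℂ) else 0) - 1 := by
    intro r
    have h1 : Finset.Icc 1 (n - 1) = Finset.Ico 1 n := by
      rw [← Finset.Ico_add_one_right_eq_Icc]
      congr 1
      omega
    have h2 : ∑ j ∈ Finset.range n, ω ^ (j * r)
        = ω ^ (0 * r) + ∑ j ∈ Finset.Ico 1 n, ω ^ (j * r) := by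
      rw [Finset.range_eq_Ico, Finset.sum_eq_sum_Ico_succ_bot (by omega)]
    rw [h1, eq_sub_iff_add_eq, ← hgeom r, h2]
    simp [add_comm]
  -- per-j facts
  have key : ∀ j ∈ Finset.Icc 1 (n - 1),
      ((1 : ℝ) / (Real.sin (j * Real.pi / n)) ^ 2 : ℂ)
        = -4 * (ω ^ j * (∑ m ∈ Finset.range n, (m : ℂ) * ω ^ (j * m)) ^ 2) / (n : ℂ) ^ 2 := by
    intro j hj
    rw [Finset.mem_Icc] at hj
    have hjn : j < n := by omega
    set z : ℂ := ω ^ j with hz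
    -- z ≠ 1
    have hz1 : z ≠ 1 := by
      intro hc
      have := (hprim.pow_eq_one_iff_dvd j).1 hc
      have := Nat.le_of_dvd (by omega) this
      omega
    -- sum of powers of z is zero
    have hsz : ∑ m ∈ Finset.range n, z ^ m = 0 := by
      have : ∀ m : ℕ, z ^ m = ω ^ (m * j) := by
        intro m; rw [hz, ← pow_mul, Nat.mul_comm]
      simp only [this]
      rw [hgeom j, if_neg]
      intro hd
      have := Nat.le_of_dvd (by omega) hd
      omega
    set g : ℂ := ∑ m ∈ Finset.range n, (m : ℂ) * z ^ m with hg
    have hzg : (1 - z) * g = -(n : ℂ) := by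
      have := poly_id z n
      rw [hsz] at this
      have hzn : z ^ n = 1 := by rw [hz, ← pow_mul, Nat.mul_comm, pow_mul, hωn, one_pow]
      rw [hzn] at this
      rw [hg, this]; ring
    have h1z : (1 : ℂ) - z ≠ 0 := fun hc => by
      rw [hc, zero_mul] at hzg; exact hnC (by simpa using hzg.symm)
    -- trig identity
    set x : ℝ := j * Real.pi / n with hx
    have hsin : 0 < Real.sin x := by
      apply Real.sin_pos_of_pos_of_lt_pi
      · rw [hx]
        have h1 : (0:ℝ) < (j:ℝ) := by exact_mod_cast Nat.pos_of_ne_zero (by omega)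
        have h2 : (0:ℝ) < (n:ℝ) := by exact_mod_cast Nat.pos_of_ne_zero hn0
        positivity
      · rw [hx, div_lt_iff₀ (by exact_mod_cast Nat.pos_of_ne_zero hn0)]
        have : (j:ℝ) < (n:ℝ) := by exact_mod_cast hjn
        nlinarith [Real.pi_pos]
    have hsin' : Real.sin x ≠ 0 := ne_of_gt hsin
    have htrig : (1 - z) ^ 2 = -4 * z * ((Real.sin x : ℝ) : ℂ) ^ 2 := by
      set e : ℂ := Complex.exp ((x : ℂ) * I) with hedef
      have he : z = e * e := by
        rw [hz, hω, ← Complex.exp_nat_mul, hedef, ← Complex.exp_add]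
        congr 1
        rw [hx]
        push_cast
        field_simp
        ring
      have hes : Complex.exp (-(x : ℂ) * I) - e = -2 * I * ((Real.sin x : ℝ) : ℂ) := by
        rw [Complex.ofReal_sin, Complex.sin, hedef]
        linear_combination (Complex.exp (-(x:ℂ)*I) - Complex.exp ((x:ℂ)*I)) * Complex.I_sq
      have hmul : e * Complex.exp (-(x : ℂ) * I) = 1 := by
        rw [hedef, ← Complex.exp_add]
        simp
      have h1 : 1 - z = e * (Complex.exp (-(x : ℂ) * I) - e) := by
        rw [mul_sub, hmul, he]
      rw [h1, hes, he]
      linear_combination (4 * e * e * ((Real.sin x : ℝ) : ℂ) ^ 2) * Complex.I_sq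
    -- assemble
    have hinv : (1 : ℂ) / (1 - z) ^ 2 = g ^ 2 / (n : ℂ) ^ 2 := by
      have hgg : g = -(n : ℂ) / (1 - z) := by
        rw [eq_div_iff h1z]
        linear_combination hzg
      rw [hgg]
      field_simp
    have hzne : z ≠ 0 := by
      rw [hz, hω, ← Complex.exp_nat_mul]
      exact Complex.exp_ne_zero _
    
    have hsC : ((Real.sin x : ℝ) : ℂ) ≠ 0 := by exact_mod_cast hsin'
    have h2 : ((Real.sin x : ℝ) : ℂ) ^ 2 = (1 - z) ^ 2 / (-4 * z) := by
      rw [htrig]; field_simp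
    have hgz : ∑ m ∈ Finset.range n, (m : ℂ) * ω ^ (j * m) = g := by
      rw [hg]
      refine Finset.sum_congr rfl fun m _ => ?_
      rw [hz, ← pow_mul]
    rw [hgz]
    rw [Complex.ofReal_one, h2, one_div_div, div_eq_mul_one_div ((-4:ℂ)*z), hinv]
    ring
  -- now the global computation
  have hA : ∑ m ∈ Finset.range n, (m : ℂ) = n * (n - 1) / 2 := sum_range_cast n
  have hB : ∑ m ∈ Finset.range n, (m : ℂ) ^ 2 = n * (n - 1) * (2 * n - 1) / 6 :=
    sum_range_sq_cast n
  have hmain : ((∑ j ∈ Finset.Icc 1 (n - 1),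
        (1 : ℝ) / (Real.sin (j * Real.pi / n)) ^ 2 : ℝ) : ℂ)
      = (((n : ℝ) ^ 2 - 1) / 3 : ℝ) := by
    push_cast
    rw [Finset.sum_congr rfl (fun j hj => by
      have := key j hj
      push_cast at this ⊢
      exact this)]
    -- expand the square and swap sums
    have hsq : ∀ j : ℕ, ω ^ j * (∑ m ∈ Finset.range n, (m : ℂ) * ω ^ (j * m)) ^ 2
        = ∑ m ∈ Finset.range n, ∑ l ∈ Finset.range n,
            ((m : ℂ) * l) * ω ^ (j * (m + l + 1)) := by
      intro j
      rw [sq, Finset.sum_mul_sum, Finset.mul_sum]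
      refine Finset.sum_congr rfl fun m _ => ?_
      rw [Finset.mul_sum]
      refine Finset.sum_congr rfl fun l _ => ?_
      have hpow : ω ^ j * (ω ^ (j * m) * ω ^ (j * l)) = ω ^ (j * (m + l + 1)) := by
        rw [← pow_add, ← pow_add]
        congr 1
        ring
      calc ω ^ j * ((m : ℂ) * ω ^ (j * m) * ((l : ℂ) * ω ^ (j * l)))
          = ((m : ℂ) * l) * (ω ^ j * (ω ^ (j * m) * ω ^ (j * l))) := by ring
        _ = ((m : ℂ) * l) * ω ^ (j * (m + l + 1)) := by rw [hpow]
    have expand : ∀ j ∈ Finset.Icc 1 (n - 1),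
        -4 * (ω ^ j * (∑ m ∈ Finset.range n, (m : ℂ) * ω ^ (j * m)) ^ 2) / (n : ℂ) ^ 2
          = (-4 / (n : ℂ) ^ 2) * ∑ m ∈ Finset.range n, ∑ l ∈ Finset.range n,
              ((m : ℂ) * l) * ω ^ (j * (m + l + 1)) := by
      intro j hj
      rw [← hsq j]
      ring
    rw [Finset.sum_congr rfl expand, ← Finset.mul_sum]
    rw [Finset.sum_comm]
    have swap2 : ∑ m ∈ Finset.range n, ∑ j ∈ Finset.Icc 1 (n - 1),
          ∑ l ∈ Finset.range n, ((m : ℂ) * l) * ω ^ (j * (m + l + 1))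
        = ∑ m ∈ Finset.range n, ∑ l ∈ Finset.range n,
            ((m : ℂ) * l) * ((if n ∣ (m + l + 1) then (n : ℂ) else 0) - 1) := by
      refine Finset.sum_congr rfl fun m _ => ?_
      rw [Finset.sum_comm]
      refine Finset.sum_congr rfl fun l _ => ?_
      rw [← Finset.mul_sum, hIcc]
    rw [swap2]
    -- replace divisibility condition
    have hcond : ∀ m ∈ Finset.range n, ∀ l ∈ Finset.range n,
        (if n ∣ (m + l + 1) then (n : ℂ) else 0) = (if l = n - 1 - m then (n : ℂ) else 0) := by
      intro m hm l hl
      rw [Finset.mem_range] at hm hl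
      congr 1
      simp only [eq_iff_iff]
      constructor
      · rintro ⟨c, hc⟩
        rcases c with _ | _ | c
        · omega
        · omega
        · exfalso
          have h2n : n * 2 ≤ n * (c + 1 + 1) := Nat.mul_le_mul_left _ (by omega)
          omega
      · intro h
        exact ⟨1, by omega⟩
    have step1 : ∑ m ∈ Finset.range n, ∑ l ∈ Finset.range n,
          ((m : ℂ) * l) * ((if n ∣ (m + l + 1) then (n : ℂ) else 0) - 1)
        = ∑ m ∈ Finset.range n, (((m : ℂ) * ((n : ℂ) - 1 - m)) * n
            - (m : ℂ) * (∑ l ∈ Finset.range n, (l : ℂ))) := by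
      refine Finset.sum_congr rfl fun m hm => ?_
      have hmn : m < n := Finset.mem_range.1 hm
      have : ∀ l ∈ Finset.range n,
          ((m : ℂ) * l) * ((if n ∣ (m + l + 1) then (n : ℂ) else 0) - 1)
            = (if l = n - 1 - m then ((m : ℂ) * l) * n else 0) - (m : ℂ) * l := by
        intro l hl
        rw [hcond m hm l hl]
        split <;> ring
      rw [Finset.sum_congr rfl this, Finset.sum_sub_distrib]
      rw [Finset.sum_ite_eq' (Finset.range n) (n - 1 - m) (fun l => ((m : ℂ) * l) * n)]
      rw [if_pos (Finset.mem_range.2 (by omega))]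
      have hcast : ((n - 1 - m : ℕ) : ℂ) = (n : ℂ) - 1 - m := by
        have h1 : ((n - 1 - m : ℕ) : ℂ) = ((n - 1 : ℕ) : ℂ) - (m : ℂ) :=
          Nat.cast_sub (by omega)
        have h2 : ((n - 1 : ℕ) : ℂ) = (n : ℂ) - 1 := by
          have := Nat.cast_sub (R := ℂ) (show 1 ≤ n by omega)
          simpa using this
        rw [h1, h2]
      rw [hcast, ← Finset.mul_sum]
    rw [step1, Finset.sum_sub_distrib]
    have e1 : ∑ m ∈ Finset.range n, ((m : ℂ) * ((n : ℂ) - 1 - m)) * n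
        = ((n : ℂ) * ((n : ℂ) - 1) / 2 * ((n : ℂ) - 1)
            - (n : ℂ) * ((n : ℂ) - 1) * (2 * (n : ℂ) - 1) / 6) * n := by
      rw [← Finset.sum_mul]
      congr 1
      have h : ∀ m ∈ Finset.range n, (m : ℂ) * ((n : ℂ) - 1 - m)
          = (m : ℂ) * ((n : ℂ) - 1) - (m : ℂ) ^ 2 := by
        intro m _; ring
      rw [Finset.sum_congr rfl h, Finset.sum_sub_distrib, ← Finset.sum_mul, hA, hB]
    have e2 : ∑ m ∈ Finset.range n, (m : ℂ) * (∑ l ∈ Finset.range n, (l : ℂ))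
        = ((n : ℂ) * ((n : ℂ) - 1) / 2) * ((n : ℂ) * ((n : ℂ) - 1) / 2) := by
      rw [hA, ← Finset.sum_mul, hA]
    rw [e1, e2]
    field_simp
    ring
  have := hmain
  exact_mod_cast this

lemma six_dvd_aux (k : ℕ) : 6 ∣ (k + 1) * (k + 2) * (k + 3) := by
  induction k with
  | zero => decide
  | succ k ih =>
    have h2 : 2 ∣ (k + 2) * (k + 3) := (Nat.even_mul_succ_self (k + 2)).two_dvd
    obtain ⟨c, hc⟩ := h2
    have hsplit : (k + 1 + 1) * (k + 1 + 2) * (k + 1 + 3)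
        = (k + 1) * (k + 2) * (k + 3) + 3 * ((k + 2) * (k + 3)) := by ring
    rw [hsplit]
    exact dvd_add ih ⟨c, by rw [hc]; ring⟩

end VerlindeAux

theorem genus_two_rank_two_verlinde (k : ℕ) :
    (k : ℝ) ^ 2 * (((k : ℝ) + 2) / 2) *
        ∑ j ∈ Finset.Icc 1 (k + 1), (1 : ℝ) / (Real.sin (j * π / (k + 2))) ^ 2
      = (k : ℝ) ^ 2 * ((k : ℝ) + 1) * ((k : ℝ) + 2) * ((k : ℝ) + 3) / 6 ∧
    ∃ m : ℕ, (k : ℝ) ^ 2 * (((k : ℝ) + 2) / 2) *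
        ∑ j ∈ Finset.Icc 1 (k + 1), (1 : ℝ) / (Real.sin (j * π / (k + 2))) ^ 2
      = (m : ℝ) := by
  have hs := VerlindeAux.csc_sum (k + 2) (by omega)
  push_cast at hs
  norm_num at hs
  simp only [one_div]
  rw [hs]
  constructor
  · ring
  · refine ⟨k ^ 2 * ((k + 1) * (k + 2) * (k + 3)) / 6, ?_⟩
    have hdvd : 6 ∣ k ^ 2 * ((k + 1) * (k + 2) * (k + 3)) :=
      Dvd.dvd.mul_left (VerlindeAux.six_dvd_aux k) _
    rw [Nat.cast_div hdvd (by norm_num)]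
    push_cast
    ring
end
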